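/- There exist constants c₁, c₂ > 0 and a function ℓ : ℕ → ℕ satisfying c₁·n/log n ≤ ℓ(n) ≤ c₂·n/log n for all sufficiently large n, such that if (L,M) is a random ℓ(n)-correspondence assignment for the complete graph K_n, then the probability that K_n is (L,M)-colorable tends to 1 as n → ∞. -/

import Mathlib

open Filter MeasureTheory

namespace RandomCorr

/-- A correspondence assignment for a graph `G`: a list assignment `L` together with,
for each edge, a partial matching between the colors of its endpoints,
encoded as a symmetric relation `M` supported on edges of `G`. -/
structure CorrAssignment {V : Type} (G : SimpleGraph V) where
  L : V → Finset ℕ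
  M : V → ℕ → V → ℕ → Prop
  symm : ∀ u i v j, M u i v j → M v j u i
  adj_of : ∀ u i v j, M u i v j → G.Adj u v
  mem_left : ∀ u i v j, M u i v j → i ∈ L u
  mem_right : ∀ u i v j, M u i v j → j ∈ L v
  matching : ∀ u i v j j', M u i v j → M u i v j' → j = j'

variable {V : Type}

/-- An `(L,M)`-coloring. -/
def CorrAssignment.IsColoring {G : SimpleGraph V} (C : CorrAssignment G) (φ : V → ℕ) : Prop :=
  (∀ v, φ v ∈ C.L v) ∧ ∀ u v, ¬ C.M u (φ u) v (φ v)

/-- `(L,M)` is an `ℓ`-correspondence assignment. -/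
def IsLAssignment {G : SimpleGraph V} (C : CorrAssignment G) (ℓ : ℕ) : Prop :=
  ∀ v, ℓ ≤ (C.L v).card

/-- The correspondence chromatic number of `G` is at most `ℓ`. -/
def corrChromAtMost (G : SimpleGraph V) (ℓ : ℕ) : Prop :=
  ∀ C : CorrAssignment G, IsLAssignment C ℓ → ∃ φ, C.IsColoring φ

/-- Maximum degree of a finite graph. -/
noncomputable def maxDeg [Fintype V] (G : SimpleGraph V) : ℕ :=
  Finset.univ.sup fun v => (G.neighborSet v).ncard

/-- `binom(n, ≤ b) = ∑_{i=0}^{⌊b⌋} binom(n,i)`. -/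
noncomputable def binomLe (n : ℕ) (b : ℝ) : ℕ :=
  ∑ i ∈ Finset.range (⌊b⌋₊ + 1), n.choose i

/-- The number of independent sets (including the empty set) of a subgraph `F`. -/
noncomputable def subIndepCount {W : Type} {H : SimpleGraph W} (F : H.Subgraph) : ℕ :=
  {S : Set W | S ⊆ F.verts ∧ ∀ a ∈ S, ∀ b ∈ S, ¬ F.Adj a b}.ncard

/-- A neighborhood subgraph: a subgraph whose vertex set is contained in the
neighborhood of some vertex. -/
def IsNbrSubgraph {W : Type} {H : SimpleGraph W} (F : H.Subgraph) : Prop :=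
  ∃ v, F.verts ⊆ H.neighborSet v

/-- `G` is `b`-IS-rich (with respect to maximum degree `Δ`): every `b`-large
neighborhood subgraph `F` satisfies `I(F) ≥ 2 · binom(|V(F)|, ≤ b)`. -/
def ISRich (G : SimpleGraph V) (b : ℝ) (Δ : ℕ) : Prop :=
  ∀ F : G.Subgraph, IsNbrSubgraph F →
    (Δ : ℝ) ^ ((1 : ℝ)/3) < (binomLe F.verts.ncard b : ℝ) →
    2 * binomLe F.verts.ncard b ≤ subIndepCount F

/-- The cover graph of a correspondence assignment. -/
def coverGraph {G : SimpleGraph V} (C : CorrAssignment G) : SimpleGraph (V × ℕ) where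
  Adj x y := C.M x.1 x.2 y.1 y.2
  symm := ⟨fun x y h => C.symm _ _ _ _ h⟩
  loopless := ⟨fun x h => (G.loopless.irrefl x.1) (C.adj_of _ _ _ _ h)⟩

/-- A correspondence assignment is `b`-IS-rich (with respect to `Δ`) if every `b`-large
neighborhood subgraph of its cover graph has at least `2 · binom(|V(F)|, ≤ b)`
independent sets. -/
def CorrAssignment.ISRich {G : SimpleGraph V} (C : CorrAssignment G) (b : ℝ) (Δ : ℕ) : Prop :=
  ∀ F : (coverGraph C).Subgraph, IsNbrSubgraph F →
    (Δ : ℝ) ^ ((1 : ℝ)/3) < (binomLe F.verts.ncard b : ℝ) →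
    2 * binomLe F.verts.ncard b ≤ subIndepCount F

/-- Bernoulli measure on `Bool` with success probability `p` (truncated to `[0,1]`). -/
noncomputable def bern (p : ℝ) : Measure Bool :=
  (PMF.bernoulli (min (Real.toNNReal p) 1) (min_le_right _ _)).toMeasure

/-- The Erdős–Rényi measure: each potential edge appears independently with
probability `p`. -/
noncomputable def erdosRenyi (n : ℕ) (p : ℝ) : Measure (Sym2 (Fin n) → Bool) :=
  Measure.pi fun _ => bern p

/-- The graph determined by an edge-indicator function. -/
def graphOf {n : ℕ} (ω : Sym2 (Fin n) → Bool) : SimpleGraph (Fin n) where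
  Adj u v := u ≠ v ∧ ω s(u, v) = true
  symm := ⟨by
    intro u v h
    refine ⟨h.1.symm, ?_⟩
    rw [Sym2.eq_swap]
    exact h.2⟩
  loopless := ⟨fun u h => h.1 rfl⟩

/-- `G` has a complete minor of order `k`. -/
def HasCompleteMinor (G : SimpleGraph V) (k : ℕ) : Prop :=
  ∃ B : Fin k → Set V,
    (∀ i, (B i).Nonempty) ∧
    (∀ i, (G.induce (B i)).Connected) ∧
    (∀ i j, i ≠ j → Disjoint (B i) (B j)) ∧
    (∀ i j, i ≠ j → ∃ u ∈ B i, ∃ v ∈ B j, G.Adj u v)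

/-- The Hadwiger number: the largest `k` such that `K_k` is a minor of `G`. -/
noncomputable def hadwigerNumber [Fintype V] (G : SimpleGraph V) : ℕ :=
  sSup {k | HasCompleteMinor G k}

/-- Independence number. -/
noncomputable def indepNum [Fintype V] (G : SimpleGraph V) : ℕ :=
  sSup {k | ∃ S : Finset V, S.card = k ∧ ∀ a ∈ S, ∀ b ∈ S, ¬ G.Adj a b}

/-- A partial `(L,M)`-coloring. -/
def IsPartialColoring {G : SimpleGraph V} (C : CorrAssignment G) (φ : V → Option ℕ) : Prop :=
  (∀ v c, φ v = some c → c ∈ C.L v) ∧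
  ∀ u v cu cv, φ u = some cu → φ v = some cv → ¬ C.M u cu v cv

/-- The number of colors available at `u` with respect to a partial coloring `φ`. -/
noncomputable def availCount {G : SimpleGraph V} (C : CorrAssignment G)
    (φ : V → Option ℕ) (u : V) : ℕ :=
  {c : ℕ | c ∈ C.L u ∧ ∀ v cv, φ v = some cv → ¬ C.M u c v cv}.ncard

/-- The event `A_u`: `u` is uncolored and fewer than `Δ^{7/12}` colors are available
at `u`. -/
def EventA {G : SimpleGraph V} (C : CorrAssignment G) (Δ : ℕ) (u : V)
    (φ : V → Option ℕ) : Prop :=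
  φ u = none ∧ (availCount C φ u : ℝ) < (Δ : ℝ) ^ ((7 : ℝ)/12)

/-- The number of independent sets of `F` of size at least `m`. -/
noncomputable def indepGeCount {W : Type} {H : SimpleGraph W} (F : H.Subgraph) (m : ℕ) : ℕ :=
  {S : Set W | S ⊆ F.verts ∧ (∀ a ∈ S, ∀ b ∈ S, ¬ F.Adj a b) ∧ m ≤ S.ncard}.ncard

/-- The median size `ᾱ(F)` of an independent set: the largest `m` such that at least
half of the independent sets of `F` have size at least `m`. -/
noncomputable def medianIndep {W : Type} {H : SimpleGraph W} (F : H.Subgraph) : ℕ :=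
  sSup {m : ℕ | subIndepCount F ≤ 2 * indepGeCount F m}

end RandomCorr

/-!
Color the vertices `0, 1, …, n-1` of `K_n` greedily in this order. Vertex `v` gets stuck only if
the colors `σ_{uv}(φ u)`, `u < v`, exhaust all `ℓ` colors. Given the edges not incident to `v` from
above, these `v` colors are independent and uniform, so by the positive correlation of the events
"color `c` is missed" the probability of getting stuck is at most `(1 - (1 - 1/ℓ)^v)^ℓ`. For
`ℓ ≈ 3n / log n` this is `exp(-Ω(n^{1/3} / log n)) = o(1/n)`, and a union bound over `v` finishes.
-/

namespace RandomCorrespondence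

open Finset Function Equiv Filter Real

section Covering

variable {α β : Type*} [Fintype α] [DecidableEq α] [Fintype β] [DecidableEq β]

/-- Covering `S` and avoiding `c ∉ S` are positively correlated. The injection replaces the
`c`-values of `f` by the values of `k : α → {b // b ≠ c}` and puts `c` into `k` at those places. -/
theorem card_covering_mul_le_card_covering_avoiding (S : Finset β) {c : β} (hc : c ∉ S) :
    #{f : α → β | ∀ b ∈ S, ∃ a, f a = b} * (Fintype.card β - 1) ^ Fintype.card α ≤
      #{f : α → β | (∀ b ∈ S, ∃ a, f a = b) ∧ ∀ a, f a ≠ c} * Fintype.card β ^ Fintype.card α := by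
  have hcompl : Fintype.card {b : β // b ≠ c} = Fintype.card β - 1 := by
    rw [Fintype.card_subtype_compl, Fintype.card_subtype_eq]
  rw [← hcompl, ← Fintype.card_fun, ← Fintype.card_fun, ← card_univ, ← card_univ,
    ← card_product, ← card_product]
  refine card_le_card_of_injOn
    (fun p => (fun a => if p.1 a = c then (p.2 a).1 else p.1 a,
      fun a => if p.1 a = c then c else (p.2 a).1)) ?_ ?_
  · rintro ⟨f, k⟩ hfk
    simp only [coe_product, Set.mem_prod, mem_coe, mem_filter, mem_univ, true_and,
      and_true] at hfk ⊢
    refine ⟨fun b hb => ?_, fun a => ?_⟩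
    · obtain ⟨a, rfl⟩ := hfk b hb
      exact ⟨a, if_neg fun (h : f a = c) => hc (h ▸ hb)⟩
    · split_ifs with h
      · exact (k a).2
      · exact h
  · rintro ⟨f, k⟩ - ⟨f', k'⟩ - heq
    simp only [Prod.mk.injEq, funext_iff] at heq
    obtain ⟨hfst, hsnd⟩ := heq
    have key : ∀ a, f a = f' a ∧ k a = k' a := fun a => by
      have h₁ := hfst a
      have h₂ := hsnd a
      have := (k a).2
      have := (k' a).2
      by_cases ha : f a = c <;> by_cases ha' : f' a = c <;>
        simp_all [Subtype.ext_iff]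
    exact Prod.ext (funext fun a => (key a).1) (funext fun a => (key a).2)

theorem card_covering_insert (S : Finset β) (c : β) :
    #{f : α → β | ∀ b ∈ insert c S, ∃ a, f a = b} +
      #{f : α → β | (∀ b ∈ S, ∃ a, f a = b) ∧ ∀ a, f a ≠ c} =
      #{f : α → β | ∀ b ∈ S, ∃ a, f a = b} := by
  rw [← card_filter_add_card_filter_not (s := {f : α → β | ∀ b ∈ S, ∃ a, f a = b})
    (fun f => ∃ a, f a = c), filter_filter, filter_filter]
  congr 3 <;> ext f <;> simp [and_comm]

/-- The events "`b` is hit", `b ∈ S`, are negatively correlated. -/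
theorem card_covering_le (S : Finset β) :
    (#{f : α → β | ∀ b ∈ S, ∃ a, f a = b} : ℝ) ≤
      Fintype.card β ^ Fintype.card α *
        (1 - (1 - 1 / Fintype.card β : ℝ) ^ Fintype.card α) ^ #S := by
  induction S using Finset.induction_on with
  | empty => simp
  | @insert c S hc ih =>
    set N := #{f : α → β | ∀ b ∈ S, ∃ a, f a = b}
    set q : ℝ := (1 - 1 / Fintype.card β) ^ Fintype.card α
    have hβ : (1 : ℝ) ≤ Fintype.card β := by exact_mod_cast Fintype.card_pos_iff.mpr ⟨c⟩
    have hq₀ : 0 ≤ 1 - 1 / (Fintype.card β : ℝ) := by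
      rw [sub_nonneg]; exact div_le_one_of_le₀ hβ (by linarith)
    have hq₁ : q ≤ 1 := pow_le_one₀ hq₀ (by simp)
    have havoid : N * q ≤ #{f : α → β | (∀ b ∈ S, ∃ a, f a = b) ∧ ∀ a, f a ≠ c} := by
      have h := card_covering_mul_le_card_covering_avoiding (α := α) S hc
      have hq : q =
          (Fintype.card β - 1) ^ Fintype.card α / Fintype.card β ^ Fintype.card α := by
        rw [← div_pow, sub_div, div_self (by positivity)]
      rw [hq, ← mul_div_assoc, div_le_iff₀ (by positivity)]
      rw [← Nat.cast_le (α := ℝ)] at h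
      push_cast [Nat.cast_sub (Fintype.card_pos_iff.mpr ⟨c⟩)] at h
      exact h
    have hsplit := card_covering_insert (α := α) S c
    rw [← Nat.cast_inj (R := ℝ), Nat.cast_add] at hsplit
    calc (#{f : α → β | ∀ b ∈ insert c S, ∃ a, f a = b} : ℝ) ≤ N * (1 - q) := by linarith
      _ ≤ Fintype.card β ^ Fintype.card α * (1 - q) ^ #S * (1 - q) :=
        mul_le_mul_of_nonneg_right ih (by linarith)
      _ = _ := by rw [card_insert_of_notMem hc, pow_succ, mul_assoc]

theorem card_surjective_le :
    (#{f : α → β | Surjective f} : ℝ) ≤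
      Fintype.card β ^ Fintype.card α *
        (1 - (1 - 1 / Fintype.card β : ℝ) ^ Fintype.card α) ^ Fintype.card β := by
  have hS : ({f : α → β | ∀ b ∈ univ, ∃ a, f a = b} : Finset _) =
      ({f : α → β | Surjective f} : Finset _) :=
    filter_congr fun f _ => by simp [Surjective]
  simpa only [hS, card_univ] using card_covering_le (α := α) (univ : Finset β)

end Covering

theorem _root_.Equiv.Perm.eq_of_mul_swap_eq {γ : Type*} [DecidableEq γ] {τ τ' : Perm γ}
    {c a a' : γ} (hc : τ c = τ' c) (h : τ * swap c a = τ' * swap c a') : a = a' ∧ τ = τ' := by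
  have ha : swap c a' a = c := τ'.injective <| by
    rw [← Perm.mul_apply, ← h, Perm.mul_apply, swap_apply_right, hc]
  obtain rfl : a = a' := by rwa [swap_apply_eq_iff, swap_apply_left] at ha
  exact ⟨rfl, mul_right_cancel h⟩

theorem _root_.Fin.card_subtype_lt {n : ℕ} (v : Fin n) : Fintype.card {u // u < v} = v := by
  rw [Fintype.card_subtype, ← Fin.card_Iio]; congr 1; ext; simp

section Greedy

abbrev Edge (n : ℕ) := {e : Fin n × Fin n // e.1 < e.2}

variable {n ℓ : ℕ} [NeZero ℓ]

def edgeTo {v : Fin n} (u : {u // u < v}) : Edge n := ⟨(u.1, v), u.2⟩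

/-- When every color is blocked, `epsilon` returns an arbitrary color. -/
noncomputable def greedy (σ : Edge n → Perm (Fin ℓ)) (v : Fin n) : Fin ℓ :=
  Classical.epsilon fun c => ∀ u : {u // u < v}, σ (edgeTo u) (greedy σ u) ≠ c
termination_by v
decreasing_by exact u.2

noncomputable def blockedColors (σ : Edge n → Perm (Fin ℓ)) (v : Fin n) (u : {u // u < v}) :
    Fin ℓ :=
  σ (edgeTo u) (greedy σ u)

theorem greedy_ne_blockedColors {σ : Edge n → Perm (Fin ℓ)} {v : Fin n}
    (hv : ¬ Surjective (blockedColors σ v)) (u : {u // u < v}) :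
    blockedColors σ v u ≠ greedy σ v := by
  obtain ⟨c, hc⟩ := not_forall.mp hv
  rw [greedy]
  exact Classical.epsilon_spec (p := fun c => ∀ u, blockedColors σ v u ≠ c)
    ⟨c, fun u hu => hc ⟨u, hu⟩⟩ u

theorem greedy_isColoring {σ : Edge n → Perm (Fin ℓ)}
    (h : ∀ v, ¬ Surjective (blockedColors σ v)) (e : Edge n) :
    σ e (greedy σ e.1.1) ≠ greedy σ e.1.2 :=
  greedy_ne_blockedColors (h e.1.2) ⟨e.1.1, e.2⟩

theorem greedy_congr {σ σ' : Edge n → Perm (Fin ℓ)} (v : Fin n)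
    (h : ∀ e : Edge n, e.1.2 ≤ v → σ e = σ' e) : greedy σ v = greedy σ' v := by
  rw [greedy, greedy]
  congr! 4 with c u
  rw [h _ le_rfl, greedy_congr u fun e he => h e (he.trans u.2.le)]
termination_by v
decreasing_by exact u.2

/-- The resampled permutation on `uv` maps `g u` to the blocked color `σ_{uv} (greedy σ u)`. As
the colors below `v` do not see the edges into `v`, `(blockedColors σ v, resample v σ g)`
determines `(σ, g)`: given the other edges, the blocked colors at `v` are uniform and independent. -/
noncomputable def resample (v : Fin n) (σ : Edge n → Perm (Fin ℓ)) (g : {u // u < v} → Fin ℓ) :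
    Edge n → Perm (Fin ℓ) := fun e =>
  if h : e.1.2 = v then σ e * swap (greedy σ e.1.1) (g ⟨e.1.1, h ▸ e.2⟩) else σ e

theorem injective_blockedColors_resample (v : Fin n) :
    Injective fun p : (Edge n → Perm (Fin ℓ)) × ({u // u < v} → Fin ℓ) =>
      (blockedColors p.1 v, resample v p.1 p.2) := by
  rintro ⟨σ, g⟩ ⟨σ', g'⟩ h
  obtain ⟨hblocked, hresample⟩ := Prod.mk.inj h
  have hoff : ∀ e : Edge n, e.1.2 ≠ v → σ e = σ' e := fun e he => by
    simpa [resample, he] using congrFun hresample e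
  have hon : ∀ u : {u // u < v}, g u = g' u ∧ σ (edgeTo u) = σ' (edgeTo u) := fun u => by
    have hcol : greedy σ u = greedy σ' u :=
      greedy_congr _ fun e he => hoff e (he.trans_lt u.2).ne
    have h₁ : σ (edgeTo u) (greedy σ u) = σ' (edgeTo u) (greedy σ u) := by
      simpa only [blockedColors, ← hcol] using congrFun hblocked u
    have h₂ : σ (edgeTo u) * swap (greedy σ u) (g u) =
        σ' (edgeTo u) * swap (greedy σ u) (g' u) := by
      simpa [resample, edgeTo, hcol] using congrFun hresample (edgeTo u)
    exact Perm.eq_of_mul_swap_eq h₁ h₂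
  refine Prod.ext (funext fun e => ?_) (funext fun u => (hon u).1)
  by_cases he : e.1.2 = v
  · obtain ⟨⟨u, w⟩, huw⟩ := e
    subst he
    exact (hon ⟨u, huw⟩).2
  · exact hoff e he

theorem card_surjective_blockedColors_mul_le (v : Fin n) :
    #{σ : Edge n → Perm (Fin ℓ) | Surjective (blockedColors σ v)} * ℓ ^ (v : ℕ) ≤
      #{f : {u // u < v} → Fin ℓ | Surjective f} * Fintype.card (Edge n → Perm (Fin ℓ)) := by
  have hv : Fintype.card ({u // u < v} → Fin ℓ) = ℓ ^ (v : ℕ) := by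
    rw [Fintype.card_fun, Fintype.card_fin, Fin.card_subtype_lt]
  rw [← hv, ← card_univ, ← card_univ, ← card_product, ← card_product]
  refine card_le_card_of_injOn _ (fun p hp => ?_) (injective_blockedColors_resample v).injOn
  simpa only [coe_product, Set.mem_prod, mem_coe, mem_filter, mem_univ, true_and,
    and_true] using hp

theorem card_surjective_blockedColors_le (v : Fin n) :
    (#{σ : Edge n → Perm (Fin ℓ) | Surjective (blockedColors σ v)} : ℝ) ≤
      Fintype.card (Edge n → Perm (Fin ℓ)) * (1 - (1 - 1 / ℓ : ℝ) ^ n) ^ ℓ := by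
  have hcount :
      (#{σ : Edge n → Perm (Fin ℓ) | Surjective (blockedColors σ v)} : ℝ) * ℓ ^ (v : ℕ) ≤
        #{f : {u // u < v} → Fin ℓ | Surjective f} * Fintype.card (Edge n → Perm (Fin ℓ)) := by
    exact_mod_cast card_surjective_blockedColors_mul_le v
  have hsurj := card_surjective_le (α := {u // u < v}) (β := Fin ℓ)
  rw [Fintype.card_fin, Fin.card_subtype_lt] at hsurj
  have hℓ : (1 : ℝ) ≤ ℓ := by exact_mod_cast NeZero.one_le
  have h₀ : 0 ≤ 1 - 1 / (ℓ : ℝ) := by rw [sub_nonneg]; exact div_le_one_of_le₀ hℓ (by linarith)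
  have h₁ : 1 - 1 / (ℓ : ℝ) ≤ 1 := by linarith [one_div_nonneg.mpr (zero_le_one.trans hℓ)]
  have hmono : (1 - (1 - 1 / ℓ : ℝ) ^ (v : ℕ)) ^ ℓ ≤ (1 - (1 - 1 / ℓ : ℝ) ^ n) ^ ℓ :=
    pow_le_pow_left₀ (by linarith [pow_le_one₀ h₀ h₁ (n := v)])
      (by linarith [pow_le_pow_of_le_one h₀ h₁ v.isLt.le]) _
  refine le_of_mul_le_mul_right (hcount.trans ?_) (by positivity : (0 : ℝ) < ℓ ^ (v : ℕ))
  calc _ ≤ (ℓ ^ (v : ℕ) * (1 - (1 - 1 / ℓ : ℝ) ^ (v : ℕ)) ^ ℓ : ℝ) *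
        Fintype.card (Edge n → Perm (Fin ℓ)) := by gcongr
    _ ≤ (ℓ ^ (v : ℕ) * (1 - (1 - 1 / ℓ : ℝ) ^ n) ^ ℓ : ℝ) *
        Fintype.card (Edge n → Perm (Fin ℓ)) := by gcongr
    _ = _ := by ring

theorem card_not_colorable_le :
    (#{σ : Edge n → Perm (Fin ℓ) |
        ¬ ∃ φ : Fin n → Fin ℓ, ∀ e : Edge n, σ e (φ e.1.1) ≠ φ e.1.2} : ℝ) ≤
      n * (Fintype.card (Edge n → Perm (Fin ℓ)) * (1 - (1 - 1 / ℓ : ℝ) ^ n) ^ ℓ) := by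
  have hsub : ({σ : Edge n → Perm (Fin ℓ) |
        ¬ ∃ φ : Fin n → Fin ℓ, ∀ e : Edge n, σ e (φ e.1.1) ≠ φ e.1.2} : Finset _) ⊆
      univ.biUnion fun v => {σ | Surjective (blockedColors σ v)} := by
    intro σ hσ
    simp only [mem_filter, mem_univ, true_and, mem_biUnion] at hσ ⊢
    by_contra! h
    exact hσ ⟨greedy σ, greedy_isColoring h⟩
  calc _ ≤ (∑ v : Fin n, #{σ : Edge n → Perm (Fin ℓ) | Surjective (blockedColors σ v)} : ℝ) :=
        mod_cast (card_le_card hsub).trans card_biUnion_le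
    _ ≤ ∑ _v : Fin n, (Fintype.card (Edge n → Perm (Fin ℓ)) * (1 - (1 - 1 / ℓ : ℝ) ^ n) ^ ℓ :
          ℝ) :=
        sum_le_sum fun v _ => card_surjective_blockedColors_le v
    _ = _ := by simp

theorem one_sub_le_colorable_ratio :
    1 - n * (1 - (1 - 1 / ℓ : ℝ) ^ n) ^ ℓ ≤
      (Set.ncard {σ : Edge n → Perm (Fin ℓ) |
          ∃ φ : Fin n → Fin ℓ, ∀ e : Edge n, σ e (φ e.1.1) ≠ φ e.1.2} : ℝ) /
        Fintype.card (Edge n → Perm (Fin ℓ)) := by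
  rw [le_div_iff₀ (by exact_mod_cast Fintype.card_pos), Set.ncard_eq_toFinset_card',
    Set.toFinset_ofPred, ← card_univ]
  have hsplit := card_filter_add_card_filter_not (s := (univ : Finset (Edge n → Perm (Fin ℓ))))
    fun σ => ∃ φ : Fin n → Fin ℓ, ∀ e : Edge n, σ e (φ e.1.1) ≠ φ e.1.2
  rw [← Nat.cast_inj (R := ℝ), Nat.cast_add] at hsplit
  rw [card_univ] at hsplit ⊢
  linarith [card_not_colorable_le (n := n) (ℓ := ℓ)]

end Greedy

section Asymptotics

theorem exp_neg_two_mul_le_one_sub {t : ℝ} (h₀ : 0 ≤ t) (h₁ : t ≤ 1 / 2) :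
    exp (-(2 * t)) ≤ 1 - t := by
  rw [exp_neg, inv_le_iff_one_le_mul₀ (exp_pos _)]
  nlinarith [add_one_le_exp (2 * t)]

theorem one_sub_one_sub_div_pow_pow_le {ℓ : ℕ} (hℓ : 2 ≤ ℓ) (n : ℕ) :
    (1 - (1 - 1 / ℓ : ℝ) ^ n) ^ ℓ ≤ exp (-(ℓ * exp (-(2 * n / ℓ)))) := by
  have hℓ' : (2 : ℝ) ≤ ℓ := by exact_mod_cast hℓ
  have hq : exp (-(2 * n / ℓ)) ≤ (1 - 1 / ℓ : ℝ) ^ n := by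
    rw [show -(2 * n / ℓ : ℝ) = n * -(2 * (1 / ℓ)) by ring, exp_nat_mul]
    gcongr
    exact exp_neg_two_mul_le_one_sub (by positivity) (by rw [div_le_div_iff₀] <;> linarith)
  calc (1 - (1 - 1 / ℓ : ℝ) ^ n) ^ ℓ ≤ exp (-exp (-(2 * n / ℓ))) ^ ℓ := by
        gcongr
        · have : (1 / ℓ : ℝ) ≤ 1 := by rw [div_le_one] <;> linarith
          linarith [pow_le_one₀ (n := n) (by linarith : (0 : ℝ) ≤ 1 - 1 / ℓ)
            (sub_le_self _ (by positivity))]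
        · linarith [one_sub_le_exp_neg ((1 - 1 / ℓ : ℝ) ^ n), exp_le_exp.mpr (neg_le_neg hq)]
    _ = _ := by rw [← exp_nat_mul]; ring_nf

theorem eventually_two_mul_sq_le_three_mul_exp :
    ∀ᶠ x : ℝ in atTop, 2 * x ^ 2 ≤ 3 * exp (x / 3) := by
  filter_upwards [((tendsto_exp_div_pow_atTop 2).comp (tendsto_id.atTop_div_const
    (by norm_num : (0 : ℝ) < 3))).eventually_ge_atTop 6, eventually_gt_atTop 0] with x hx hx₀
  simp only [Function.comp_apply, id, le_div_iff₀ (by positivity : (0 : ℝ) < (x / 3) ^ 2)] at hx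
  nlinarith

noncomputable def numColors (n : ℕ) : ℕ := ⌈3 * n / log n⌉₊

theorem numColors_pos {n : ℕ} (hn : 2 ≤ n) : 0 < numColors n :=
  Nat.ceil_pos.mpr (div_pos (by positivity) (log_pos (by exact_mod_cast hn)))

theorem eventually_numColors_bounds : ∀ᶠ n : ℕ in atTop,
    3 * n / log n ≤ (numColors n : ℝ) ∧ (numColors n : ℝ) ≤ 4 * n / log n := by
  filter_upwards [eventually_gt_atTop 0,
    (tendsto_log_atTop.comp tendsto_natCast_atTop_atTop).eventually_gt_atTop 0] with n hn hlog
  rw [Function.comp_apply] at hlog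
  replace hn : (0 : ℝ) < n := by exact_mod_cast hn
  refine ⟨Nat.le_ceil _, (Nat.ceil_lt_add_one (by positivity)).le.trans ?_⟩
  rw [show 4 * n / log n = 3 * n / log n + n / log n by ring, add_le_add_iff_left,
    le_div_iff₀ hlog, one_mul]
  exact log_le_self hn.le

theorem eventually_failure_le : ∀ᶠ n : ℕ in atTop,
    (n : ℝ) * (1 - (1 - 1 / numColors n : ℝ) ^ n) ^ numColors n ≤ 1 / n := by
  have hlog := tendsto_log_atTop.comp (tendsto_natCast_atTop_atTop (R := ℝ))
  filter_upwards [eventually_gt_atTop 0, hlog.eventually_gt_atTop 0,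
    hlog.eventually eventually_two_mul_sq_le_three_mul_exp, eventually_numColors_bounds]
    with n hn hlog₀ hexp hbounds
  simp only [Function.comp_apply] at hlog₀ hexp
  replace hn : (0 : ℝ) < n := by exact_mod_cast hn
  set x := log n
  set L := numColors n
  have hLx : 3 * n ≤ L * x := (div_le_iff₀ hlog₀).mp hbounds.1
  have hL : (3 : ℝ) ≤ L := by nlinarith [log_le_self hn.le]
  have hnx : (n : ℝ) = exp x := (exp_log hn).symm
  have key : 2 * x ≤ L * exp (-(2 * n / L)) := calc
    2 * x ≤ 3 * exp (x / 3) / x := by rw [le_div_iff₀ hlog₀]; nlinarith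
    _ = 3 * n / x * exp (-(2 / 3 * x)) := by
      rw [hnx, div_mul_eq_mul_div, mul_assoc, ← exp_add]; ring_nf
    _ ≤ L * exp (-(2 / 3 * x)) := by gcongr; exact hbounds.1
    _ ≤ L * exp (-(2 * n / L)) := by
      gcongr
      rw [div_le_iff₀ (by linarith)]
      linarith
  calc (n : ℝ) * (1 - (1 - 1 / L : ℝ) ^ n) ^ L ≤ n * exp (-(L * exp (-(2 * n / L)))) := by
        gcongr
        exact one_sub_one_sub_div_pow_pow_le (by exact_mod_cast (by linarith : (2 : ℝ) ≤ L)) n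
    _ ≤ n * exp (-(2 * x)) := by gcongr
    _ = 1 / n := by
      rw [exp_neg, two_mul, exp_add, ← hnx]
      field_simp

end Asymptotics

end RandomCorrespondence

/-- There is `ℓ(n) = Θ(n / log n)` such that `K_n` is a.a.s. colorable
from a random `ℓ(n)`-correspondence assignment (each edge gets an independent uniformly
random perfect matching of the color lists `{1,…,ℓ(n)}`, here encoded by a permutation). -/
theorem complete_graph_random_correspondence_colorable :
    ∃ c₁ c₂ : ℝ, 0 < c₁ ∧ 0 < c₂ ∧ ∃ ℓ : ℕ → ℕ,
      (∀ᶠ n : ℕ in Filter.atTop,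
        c₁ * n / Real.log n ≤ (ℓ n : ℝ) ∧ (ℓ n : ℝ) ≤ c₂ * n / Real.log n) ∧
      Filter.Tendsto
        (fun n : ℕ =>
          (Set.ncard {σ : {e : Fin n × Fin n // e.1 < e.2} → Equiv.Perm (Fin (ℓ n)) |
              ∃ φ : Fin n → Fin (ℓ n),
                ∀ e : {e : Fin n × Fin n // e.1 < e.2}, σ e (φ e.1.1) ≠ φ e.1.2} : ℝ) /
            (Fintype.card ({e : Fin n × Fin n // e.1 < e.2} → Equiv.Perm (Fin (ℓ n))) : ℝ))
        Filter.atTop (nhds 1) := by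
  refine ⟨3, 4, by norm_num, by norm_num, RandomCorrespondence.numColors,
    RandomCorrespondence.eventually_numColors_bounds, ?_⟩
  refine tendsto_of_tendsto_of_tendsto_of_le_of_le' (g := fun n : ℕ => 1 - 1 / (n : ℝ))
    (by simpa using (tendsto_const_nhds (x := (1 : ℝ))).sub tendsto_one_div_atTop_nhds_zero_nat)
    tendsto_const_nhds ?_ (Eventually.of_forall fun n => ?_)
  · filter_upwards [RandomCorrespondence.eventually_failure_le, eventually_ge_atTop 2]
      with n hfail hn
    have : NeZero (RandomCorrespondence.numColors n) :=
      ⟨(RandomCorrespondence.numColors_pos hn).ne'⟩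
    linarith [RandomCorrespondence.one_sub_le_colorable_ratio (n := n)
      (ℓ := RandomCorrespondence.numColors n)]
  · exact div_le_one_of_le₀
      (mod_cast (Set.ncard_le_card _).trans_eq Nat.card_eq_fintype_card) (Nat.cast_nonneg _)
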